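/- arXiv:2308.11033 — 9 statements merged into one kernel-verified Lean document; each statement's English description precedes it below -/
import Mathlib

section
/- Let T be a finite tree with vertex set {s, v_1, …, v_n}, source s, independent edge failure probabilities p_e (q_e = 1 − p_e) and vertex weights w_v ≥ 0. For each edge e of T, let path(s,e) be the set of edges on the path from s to the endpoint of e nearer to s, let D_T(e) be the total weight of the vertices in the component of T − e that does not contain s, and define the risk R_T(e) = (∏_{e' ∈ path(s,e)} q_{e'}) · p_e · D_T(e). Then the weighted SAIDI index satisfies F_T = Σ_{e ∈ E(T)} R_T(e). -/
open scoped Classical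
open Finset

/-- Probability that `v` is disconnected from the source `s` in the independent
edge-failure model. -/
noncomputable def disconProb {V : Type*} [Fintype V] [DecidableEq V]
    (G : SimpleGraph V) [DecidableRel G.Adj] (s : V) (p : Sym2 V → ℝ) (v : V) : ℝ :=
  ∑ S ∈ G.edgeFinset.powerset,
    ((∏ e ∈ S, (1 - p e)) * ∏ e ∈ G.edgeFinset \ S, p e) *
      (if (SimpleGraph.fromEdgeSet (↑S : Set (Sym2 V))).Reachable s v then 0 else 1)

/-- The weighted SAIDI index `F_G = ∑_{v ≠ s} w v · Pr_G(s ↮ v)`. -/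
noncomputable def SAIDI {V : Type*} [Fintype V] [DecidableEq V]
    (G : SimpleGraph V) [DecidableRel G.Adj] (s : V) (p : Sym2 V → ℝ) (w : V → ℝ) : ℝ :=
  ∑ v ∈ univ.filter (· ≠ s), w v * disconProb G s p v

/-- `D_G(e)`: total weight of the vertices disconnected from `s` after
deleting the edge `e` (i.e. of the component of `G - e` not containing `s`). -/
noncomputable def Dedge {V : Type*} [Fintype V] [DecidableEq V]
    (G : SimpleGraph V) (s : V) (w : V → ℝ) (e : Sym2 V) : ℝ :=
  ∑ v ∈ univ.filter (fun v => ¬ (G.deleteEdges {e}).Reachable s v), w v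

/- ### Auxiliary lemmas -/

lemma sum_weight_total {ι : Type*} [DecidableEq ι] (E : Finset ι) (p : ι → ℝ) :
    ∑ S ∈ E.powerset, (∏ e ∈ S, (1 - p e)) * ∏ e ∈ E \ S, p e = 1 := by
  rw [← Finset.prod_add]
  simp

lemma sum_weight_superset {ι : Type*} [DecidableEq ι] {E A : Finset ι} (hA : A ⊆ E)
    (p : ι → ℝ) :
    ∑ S ∈ E.powerset,
        ((∏ e ∈ S, (1 - p e)) * ∏ e ∈ E \ S, p e) * (if A ⊆ S then (1 : ℝ) else 0)
      = ∏ e ∈ A, (1 - p e) := by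
  classical
  simp only [mul_ite, mul_one, mul_zero]
  rw [← Finset.sum_filter]
  have key : ∑ S ∈ (E.powerset.filter fun S => A ⊆ S),
      (∏ e ∈ S, (1 - p e)) * ∏ e ∈ E \ S, p e
      = ∑ t ∈ (E \ A).powerset,
          (∏ e ∈ A, (1 - p e)) * ((∏ e ∈ t, (1 - p e)) * ∏ e ∈ (E \ A) \ t, p e) := by
    refine Finset.sum_nbij' (fun S => S \ A) (fun t => A ∪ t) ?_ ?_ ?_ ?_ ?_
    · intro S hS
      rw [Finset.mem_filter, Finset.mem_powerset] at hS
      exact Finset.mem_powerset.mpr (Finset.sdiff_subset_sdiff hS.1 le_rfl)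
    · intro t ht
      rw [Finset.mem_powerset] at ht
      rw [Finset.mem_filter, Finset.mem_powerset]
      exact ⟨Finset.union_subset hA (ht.trans Finset.sdiff_subset), Finset.subset_union_left⟩
    · intro S hS
      rw [Finset.mem_filter] at hS
      exact Finset.union_sdiff_of_subset hS.2
    · intro t ht
      rw [Finset.mem_powerset] at ht
      show (A ∪ t) \ A = t
      rw [Finset.union_sdiff_left]
      exact Finset.sdiff_eq_self_of_disjoint (Finset.disjoint_left.mpr fun x hx =>
        (Finset.mem_sdiff.mp (ht hx)).2)
    · intro S hS
      rw [Finset.mem_filter, Finset.mem_powerset] at hS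
      obtain ⟨hSE, hAS⟩ := hS
      have h1 : (∏ e ∈ S, (1 - p e))
          = (∏ e ∈ A, (1 - p e)) * ∏ e ∈ S \ A, (1 - p e) := by
        rw [mul_comm, Finset.prod_sdiff hAS]
      have h2 : E \ S = (E \ A) \ (S \ A) := by
        ext x
        simp only [Finset.mem_sdiff]
        constructor
        · intro hx
          exact ⟨⟨hx.1, fun hxA => hx.2 (hAS hxA)⟩, fun hh => hx.2 hh.1⟩
        · intro hx
          refine ⟨hx.1.1, fun hxS => ?_⟩
          by_cases hxA : x ∈ A
          · exact hx.1.2 hxA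
          · exact hx.2 ⟨hxS, hxA⟩
      rw [h1, h2, mul_assoc]
  rw [key, ← Finset.mul_sum, sum_weight_total, mul_one]

lemma edges_mapLe {V : Type*} {G G' : SimpleGraph V} (h : G ≤ G') {a b : V}
    (q : G.Walk a b) : (q.mapLe h).edges = q.edges := by
  have hid : ⇑(SimpleGraph.Hom.ofLE h) = id := rfl
  rw [SimpleGraph.Walk.mapLe, SimpleGraph.Walk.edges_map, hid, Sym2.map_id, List.map_id]

lemma reach_fromEdgeSet_iff {V : Type*} {T : SimpleGraph V} (hT : T.IsTree) {s v : V}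
    {P : T.Walk s v} (hP : P.IsPath) {S : Finset (Sym2 V)} (hS : ↑S ⊆ T.edgeSet) :
    (SimpleGraph.fromEdgeSet (↑S : Set (Sym2 V))).Reachable s v ↔ ∀ e ∈ P.edges, e ∈ S := by
  constructor
  · rintro ⟨W⟩
    have hle : SimpleGraph.fromEdgeSet (↑S : Set (Sym2 V)) ≤ T := by
      conv_rhs => rw [← SimpleGraph.fromEdgeSet_edgeSet (G := T)]
      exact SimpleGraph.fromEdgeSet_mono hS
    have hPeq : P = W.bypass.mapLe hle :=
      (hT.existsUnique_path s v).unique hP (W.bypass_isPath.mapLe hle)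
    intro e he
    rw [hPeq, edges_mapLe] at he
    have : e ∈ (SimpleGraph.fromEdgeSet (↑S : Set (Sym2 V))).edgeSet :=
      W.edges_subset_edgeSet (W.edges_bypass_subset he)
    rw [SimpleGraph.edgeSet_fromEdgeSet] at this
    exact this.1
  · intro h
    refine ⟨P.transfer _ fun e he => ?_⟩
    rw [SimpleGraph.edgeSet_fromEdgeSet]
    exact ⟨h e he, T.not_isDiag_of_mem_edgeSet (P.edges_subset_edgeSet he)⟩

lemma reach_delete_iff {V : Type*} {T : SimpleGraph V} (hT : T.IsTree) {s v : V}
    {P : T.Walk s v} (hP : P.IsPath) (e : Sym2 V) :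
    (T.deleteEdges {e}).Reachable s v ↔ e ∉ P.edges := by
  constructor
  · rintro ⟨W⟩ he
    have hle := T.deleteEdges_le ({e} : Set (Sym2 V))
    have hPeq : P = W.bypass.mapLe hle :=
      (hT.existsUnique_path s v).unique hP (W.bypass_isPath.mapLe hle)
    rw [hPeq, edges_mapLe] at he
    have : e ∈ (T.deleteEdges {e}).edgeSet :=
      W.edges_subset_edgeSet (W.edges_bypass_subset he)
    rw [SimpleGraph.edgeSet_deleteEdges] at this
    exact this.2 rfl
  · intro he
    refine ⟨P.transfer _ fun e' he' => ?_⟩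
    rw [SimpleGraph.edgeSet_deleteEdges]
    exact ⟨P.edges_subset_edgeSet he', fun h => he (Set.mem_singleton_iff.mp h ▸ he')⟩

/-- For a tree `T` with source `s`, writing for each edge `e` the endpoint `u e`
of `e` nearer to `s` (the endpoint reached from `s` by the unique path `Q e`
avoiding `e`), the weighted SAIDI index equals the sum over all edges of the
risks `R_T(e) = (∏_{e' ∈ path(s,e)} (1 - p e')) · p e · D_T(e)`. -/
theorem tree_risk_formula {V : Type*} [Fintype V] [DecidableEq V]
    (T : SimpleGraph V) [DecidableRel T.Adj] (hT : T.IsTree) (s : V)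
    (p : Sym2 V → ℝ) (hp : ∀ e ∈ T.edgeFinset, p e ∈ Set.Icc (0 : ℝ) 1)
    (w : V → ℝ) (hw : ∀ v, 0 ≤ w v)
    (u : Sym2 V → V) (hu : ∀ e ∈ T.edgeFinset, u e ∈ e)
    (Q : ∀ e : Sym2 V, T.Walk s (u e))
    (hQ : ∀ e ∈ T.edgeFinset, (Q e).IsPath ∧ e ∉ (Q e).edges) :
    SAIDI T s p w =
      ∑ e ∈ T.edgeFinset,
        ((Q e).edges.map fun e' => 1 - p e').prod * p e * Dedge T s w e := by
  classical
  choose P hP hPuniq using fun v => hT.existsUnique_path s v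
  have uniq : ∀ {v : V} (q₁ q₂ : T.Walk s v), q₁.IsPath → q₂.IsPath → q₁ = q₂ := by
    intro v q₁ q₂ h₁ h₂
    rw [hPuniq v q₁ h₁, hPuniq v q₂ h₂]
  set f : Sym2 V → ℝ := fun e => ((Q e).edges.map fun e' => 1 - p e').prod * p e with hf
  -- telescoping lemma
  have tele : ∀ (n : ℕ) (x : V) (W : T.Walk x s), W.length = n → W.reverse.IsPath →
      (W.reverse.edges.map f).sum = 1 - (W.reverse.edges.map fun e => 1 - p e).prod := by
    intro n
    induction n with
    | zero =>
      intro x W hlen _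
      cases W with
      | nil => simp
      | cons h W' => simp at hlen
    | succ n ihn =>
      intro x W hlen hp'
      cases W with
      | nil => simp at hlen
      | @cons _ y _ h W' =>
      have ih : W'.reverse.IsPath →
          (W'.reverse.edges.map f).sum
            = 1 - (W'.reverse.edges.map fun e => 1 - p e).prod := by
        apply ihn y W'
        simpa using hlen
      have hW'p : W'.reverse.IsPath := by
        rw [SimpleGraph.Walk.reverse_cons] at hp'
        exact hp'.of_append_left
      have heT : s(y, x) ∈ T.edgeFinset :=
        SimpleGraph.mem_edgeFinset.mpr (T.mem_edgeSet.mpr h.symm)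
      have hQe := hQ s(y, x) heT
      have hue := hu s(y, x) heT
      have hueq : u s(y, x) = y := by
        rcases Sym2.mem_iff.mp hue with h1 | h1
        · exact h1
        · exfalso
          have hcopy : ((Q s(y, x)).copy rfl h1).IsPath :=
            (SimpleGraph.Walk.isPath_copy _ rfl h1).mpr hQe.1
          have heqW : (Q s(y, x)).copy rfl h1 = (SimpleGraph.Walk.cons h W').reverse :=
            uniq _ _ hcopy hp'
          apply hQe.2
          have hmem : s(y, x) ∈ ((Q s(y, x)).copy rfl h1).edges := by
            rw [heqW, SimpleGraph.Walk.edges_reverse, List.mem_reverse,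
              SimpleGraph.Walk.edges_cons]
            rw [Sym2.eq_swap]
            exact List.mem_cons_self
          rwa [SimpleGraph.Walk.edges_copy] at hmem
      have hQeq : (Q s(y, x)).edges = W'.reverse.edges := by
        have hcopy : ((Q s(y, x)).copy rfl hueq).IsPath :=
          (SimpleGraph.Walk.isPath_copy _ rfl hueq).mpr hQe.1
        have := uniq _ _ hcopy hW'p
        rw [← SimpleGraph.Walk.edges_copy (Q s(y, x)) rfl hueq, this]
      rw [SimpleGraph.Walk.reverse_cons, SimpleGraph.Walk.edges_append,
        List.map_append, List.map_append, List.sum_append, List.prod_append, ih hW'p]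
      simp only [SimpleGraph.Walk.edges_cons, SimpleGraph.Walk.edges_nil,
        List.map_cons, List.map_nil, List.sum_cons, List.sum_nil, List.prod_cons,
        List.prod_nil, add_zero, mul_one]
      rw [hf]
      simp only [hQeq]
      ring
  have tele' : ∀ v : V, ((P v).edges.map f).sum
      = 1 - ((P v).edges.map fun e => 1 - p e).prod := by
    intro v
    have := tele (P v).reverse.length v (P v).reverse rfl
      (by rw [SimpleGraph.Walk.reverse_reverse]; exact hP v)
    rwa [SimpleGraph.Walk.reverse_reverse] at this
  -- disconnection probability via the unique path
  have discon : ∀ v : V, disconProb T s p v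
      = 1 - ((P v).edges.map fun e => 1 - p e).prod := by
    intro v
    have hAE : (P v).edges.toFinset ⊆ T.edgeFinset := by
      intro e he
      exact SimpleGraph.mem_edgeFinset.mpr
        ((P v).edges_subset_edgeSet (List.mem_toFinset.mp he))
    have hstep : ∀ S ∈ T.edgeFinset.powerset,
        ((∏ e ∈ S, (1 - p e)) * ∏ e ∈ T.edgeFinset \ S, p e) *
          (if (SimpleGraph.fromEdgeSet (↑S : Set (Sym2 V))).Reachable s v then (0:ℝ) else 1)
        = ((∏ e ∈ S, (1 - p e)) * ∏ e ∈ T.edgeFinset \ S, p e)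
          - ((∏ e ∈ S, (1 - p e)) * ∏ e ∈ T.edgeFinset \ S, p e) *
            (if (P v).edges.toFinset ⊆ S then (1:ℝ) else 0) := by
      intro S hS
      have hsub : ↑S ⊆ T.edgeSet := fun x hx =>
        SimpleGraph.mem_edgeFinset.mp (Finset.mem_powerset.mp hS hx)
      have hiff : (SimpleGraph.fromEdgeSet (↑S : Set (Sym2 V))).Reachable s v
          ↔ (P v).edges.toFinset ⊆ S := by
        rw [reach_fromEdgeSet_iff hT (hP v) hsub]
        constructor
        · intro hh x hx
          exact hh x (List.mem_toFinset.mp hx)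
        · intro hh x hx
          exact hh (List.mem_toFinset.mpr hx)
      by_cases hr : (P v).edges.toFinset ⊆ S <;> simp [hiff, hr]
    rw [disconProb, Finset.sum_congr rfl hstep, Finset.sum_sub_distrib,
      sum_weight_total, sum_weight_superset hAE,
      List.prod_toFinset _ (hP v).isTrail.edges_nodup]
  -- list sum to finset sum
  have listsum : ∀ v : V, ((P v).edges.map f).sum
      = ∑ e ∈ T.edgeFinset, if e ∈ (P v).edges then f e else 0 := by
    intro v
    rw [← List.sum_toFinset _ (hP v).isTrail.edges_nodup, ← Finset.sum_filter]
    apply Finset.sum_congr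
    · ext e
      simp only [List.mem_toFinset, Finset.mem_filter]
      constructor
      · intro he
        exact ⟨SimpleGraph.mem_edgeFinset.mpr ((P v).edges_subset_edgeSet he), he⟩
      · exact fun h => h.2
    · intro _ _; rfl
  -- main computation
  have step1 : ∀ v : V, w v * disconProb T s p v
      = ∑ e ∈ T.edgeFinset, (if e ∈ (P v).edges then w v * f e else 0) := by
    intro v
    rw [discon v, ← tele' v, listsum v, Finset.mul_sum]
    exact Finset.sum_congr rfl fun e _ => by rw [mul_ite, mul_zero]
  rw [SAIDI, Finset.sum_congr rfl fun v _ => step1 v, Finset.sum_comm]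
  apply Finset.sum_congr rfl
  intro e heE
  have hD : Dedge T s w e = ∑ v ∈ univ, if e ∈ (P v).edges then w v else 0 := by
    rw [Dedge, Finset.sum_filter]
    apply Finset.sum_congr rfl
    intro v _
    simp only [reach_delete_iff hT (hP v) e, not_not]
  have hPs : P s = SimpleGraph.Walk.nil := (hPuniq s SimpleGraph.Walk.nil
    SimpleGraph.Walk.IsPath.nil).symm
  rw [hD, Finset.mul_sum, Finset.sum_filter]
  apply Finset.sum_congr rfl
  intro v _
  by_cases hvs : v = s
  · subst hvs
    simp [hPs, hf]
  · simp only [hvs, ne_eq, not_false_eq_true, if_true]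
    rw [hf]
    split_ifs <;> ring
end

section
/- (Risk formula.) Let G be a finite graph with edge set E, source vertex s, independent edge failure probabilities p_e (q_e = 1 − p_e) and vertex weights w_v ≥ 0, and assume every vertex is connected to s when all edges work. For a minimal cut set X of G, let D_G(X) be the total weight of the vertices disconnected from s in the graph (V, E∖X), and define the risk R_G(X) = Pr_G(s↔X ∧ X fails) · D_G(X), where Pr_G(s↔X ∧ X fails) is the total probability of working-edge configurations S ⊆ E∖X such that every edge of X has at least one endpoint in the connected component of s in (V,S), multiplied by ∏_{e∈X} p_e. Then F_G = Σ_{X ∈ mcs_G} R_G(X), where mcs_G is the set of all minimal cut sets of G. -/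
open scoped Classical
open Finset

/-- `X` is a cut set: a set of edges of `G` whose removal disconnects some vertex
from the source `s`. -/
def IsCutSet {V : Type*} [Fintype V] [DecidableEq V]
    (G : SimpleGraph V) [DecidableRel G.Adj] (s : V) (X : Finset (Sym2 V)) : Prop :=
  X ⊆ G.edgeFinset ∧
    ∃ v : V, ¬ (SimpleGraph.fromEdgeSet (↑(G.edgeFinset \ X) : Set (Sym2 V))).Reachable s v

/-- A minimal cut set is a cut set no proper subset of which is a cut set. -/
def IsMinCutSet {V : Type*} [Fintype V] [DecidableEq V]
    (G : SimpleGraph V) [DecidableRel G.Adj] (s : V) (X : Finset (Sym2 V)) : Prop :=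
  IsCutSet G s X ∧ ∀ Y ⊂ X, ¬ IsCutSet G s Y

/-- `D_G(X)`: total weight of the vertices disconnected from `s` in `(V, E ∖ X)`. -/
noncomputable def Dcut {V : Type*} [Fintype V] [DecidableEq V]
    (G : SimpleGraph V) [DecidableRel G.Adj] (s : V) (w : V → ℝ) (X : Finset (Sym2 V)) : ℝ :=
  ∑ v ∈ univ.filter
      (fun v => ¬ (SimpleGraph.fromEdgeSet (↑(G.edgeFinset \ X) : Set (Sym2 V))).Reachable s v),
    w v

/-- The risk `R_G(X) = Pr_G(s ↔ X ∧ X fails) · D_G(X)`: the total probability of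
working-edge configurations `S ⊆ E ∖ X` in which every edge of `X` has an endpoint
in the connected component of `s`, multiplied by `∏_{e ∈ X} p e` and by `D_G(X)`. -/
noncomputable def risk {V : Type*} [Fintype V] [DecidableEq V]
    (G : SimpleGraph V) [DecidableRel G.Adj] (s : V) (p : Sym2 V → ℝ) (w : V → ℝ)
    (X : Finset (Sym2 V)) : ℝ :=
  (∑ S ∈ (G.edgeFinset \ X).powerset.filter
      (fun (S : Finset (Sym2 V)) => ∀ e ∈ X, ∃ u, u ∈ e ∧
        (SimpleGraph.fromEdgeSet ((S : Finset (Sym2 V)) : Set (Sym2 V))).Reachable s u),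
      (∏ e ∈ S, (1 - p e)) * ∏ e ∈ (G.edgeFinset \ X) \ S, p e) *
    (∏ e ∈ X, p e) * Dcut G s w X


set_option linter.unusedSectionVars false
set_option linter.unusedVariables false
set_option maxHeartbeats 1000000

namespace RiskAux

variable {V : Type*} [Fintype V] [DecidableEq V]

abbrev Rch (F : Finset (Sym2 V)) (a b : V) : Prop :=
  (SimpleGraph.fromEdgeSet (↑F : Set (Sym2 V))).Reachable a b

lemma rch_refl (F : Finset (Sym2 V)) (a : V) : Rch F a a := SimpleGraph.Reachable.refl a

lemma rch_mono {F F' : Finset (Sym2 V)} (h : F ⊆ F') {a b : V} (hr : Rch F a b) : Rch F' a b :=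
  hr.mono (SimpleGraph.fromEdgeSet_mono (by exact_mod_cast h))

lemma walk_closed {F : Finset (Sym2 V)} {A : Set V}
    (hA : ∀ x y, x ∈ A → (SimpleGraph.fromEdgeSet (↑F : Set (Sym2 V))).Adj x y → y ∈ A) :
    ∀ {a b : V}, (SimpleGraph.fromEdgeSet (↑F : Set (Sym2 V))).Walk a b → a ∈ A → b ∈ A := by
  intro a b w
  induction w with
  | nil => exact fun h => h
  | cons h' p ih => exact fun ha => ih (hA _ _ ha h')

lemma rch_closed {F : Finset (Sym2 V)} {A : Set V} {a b : V}
    (hA : ∀ x y, x ∈ A → (SimpleGraph.fromEdgeSet (↑F : Set (Sym2 V))).Adj x y → y ∈ A)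
    (ha : a ∈ A) (h : Rch F a b) : b ∈ A := by
  obtain ⟨w⟩ := h; exact walk_closed hA w ha

lemma rch_adj {F : Finset (Sym2 V)} {x y : V} (h : s(x,y) ∈ F) (hne : x ≠ y) :
    (SimpleGraph.fromEdgeSet (↑F : Set (Sym2 V))).Adj x y := by
  rw [SimpleGraph.fromEdgeSet_adj]
  exact ⟨by exact_mod_cast h, hne⟩

lemma adj_cases {F : Finset (Sym2 V)} {x y : V}
    (h : (SimpleGraph.fromEdgeSet (↑F : Set (Sym2 V))).Adj x y) : s(x,y) ∈ F ∧ x ≠ y := by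
  rw [SimpleGraph.fromEdgeSet_adj] at h
  exact ⟨by exact_mod_cast h.1, h.2⟩

lemma eq_pair {e : Sym2 V} {u u' : V} (hu : u ∈ e) (hu' : u' ∈ e) (hne : u ≠ u') :
    e = s(u, u') := ((Sym2.mem_and_mem_iff hne).mp ⟨hu, hu'⟩)

variable (G : SimpleGraph V) [DecidableRel G.Adj] (s : V)

/-- Failed edges touching the component of `s` in configuration `T`. -/
noncomputable def del (T : Finset (Sym2 V)) : Finset (Sym2 V) :=
  (G.edgeFinset \ T).filter (fun e => ∃ u ∈ e, Rch T s u)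

/-- The canonical minimal cut separating `v` from `s`, given configuration `T`. -/
noncomputable def Xcut (T : Finset (Sym2 V)) (v : V) : Finset (Sym2 V) :=
  (del G s T).filter (fun e => ∃ u ∈ e, Rch (G.edgeFinset \ del G s T) v u)

variable {G s}

section Fixed
variable {T : Finset (Sym2 V)} {v : V} (hT : T ⊆ G.edgeFinset) (hv : ¬ Rch T s v)

local notation "E" => G.edgeFinset
local notation "D" => del G s T
local notation "H" => G.edgeFinset \ del G s T
local notation "X" => Xcut G s T v

lemma del_subset : D ⊆ E \ T := filter_subset _ _

lemma Xcut_subset_del : X ⊆ D := filter_subset _ _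

include hT in
lemma T_subset_H : T ⊆ H := fun e he => mem_sdiff.mpr
  ⟨hT he, fun hd => (mem_sdiff.mp (del_subset hd)).2 he⟩

include hT in
/-- reaching in `H` is the same as reaching in `T` -/
lemma rch_H_iff {u : V} : Rch H s u ↔ Rch T s u := by
  constructor
  · intro h
    refine rch_closed (A := {z | Rch T s z}) ?_ (rch_refl _ _) h
    intro x y hx hadj
    obtain ⟨he, hne⟩ := adj_cases hadj
    by_cases ht : s(x,y) ∈ T
    · exact hx.trans (rch_adj ht hne).reachable
    · exact absurd he (fun hh => (mem_sdiff.mp hh).2 <|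
        mem_filter.mpr ⟨mem_sdiff.mpr ⟨(mem_sdiff.mp hh).1, ht⟩, ⟨x, Sym2.mem_mk_left _ _, hx⟩⟩)
  · exact rch_mono (T_subset_H hT)

include hT hv in
lemma C_B_disj {u : V} (hC : Rch T s u) (hB : Rch H v u) : False :=
  hv ((rch_H_iff hT).mp (((rch_mono (T_subset_H hT) hC)).trans hB.symm))

include hT hv in
lemma not_rch_sdiff_Xcut : ¬ Rch (E \ X) s v := by
  intro h
  have hvA : v ∈ {z | ¬ Rch H v z} :=
    rch_closed (A := {z | ¬ Rch H v z})
      (fun x y hx hadj hy => by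
        obtain ⟨he, hne⟩ := adj_cases hadj
        rw [mem_sdiff] at he
        by_cases hh : s(x,y) ∈ D
        · refine he.2 ?_
          rw [Xcut, mem_filter]
          exact ⟨hh, ⟨y, Sym2.mem_mk_right _ _, hy⟩⟩
        · exact hx (hy.trans (rch_adj (mem_sdiff.mpr ⟨he.1, hh⟩) hne).reachable.symm))
      (fun hs => C_B_disj hT hv (rch_refl _ _) hs) h
  exact hvA (rch_refl _ _)

lemma Xcut_cond : ∀ e ∈ X, ∃ u ∈ e, Rch T s u := fun e he =>
  (mem_filter.mp (Xcut_subset_del he)).2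

lemma Xcut_subset_E : X ⊆ E := fun e he => (mem_sdiff.mp (del_subset (Xcut_subset_del he))).1

include hT in
lemma T_subset_sdiff_Xcut : T ⊆ E \ X := fun e he => mem_sdiff.mpr
  ⟨hT he, fun hx => (mem_sdiff.mp (del_subset (Xcut_subset_del hx))).2 he⟩

include hT hv in
lemma full_conn (hconn : ∀ u, Rch E s u) {e0 : Sym2 V} (he0 : e0 ∈ X) :
    ∀ u, Rch ((E \ X) ∪ {e0}) s u := by
  obtain ⟨hd0, b, hbmem, hb⟩ := mem_filter.mp he0
  obtain ⟨het, c, hcmem, hc⟩ := mem_filter.mp hd0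
  have hcb : c ≠ b := fun h => C_B_disj hT hv hc (h ▸ hb)
  have he0eq : e0 = s(c, b) := eq_pair hcmem hbmem hcb
  set F := (E \ X) ∪ {e0} with hF
  have hHF : H ⊆ F := fun e he => mem_union_left _ <|
    mem_sdiff.mpr ⟨(mem_sdiff.mp he).1, fun hx => (mem_sdiff.mp he).2 (Xcut_subset_del hx)⟩
  have hTF : T ⊆ F := (T_subset_H hT).trans hHF
  have hsb : Rch F s b :=
    (rch_mono hTF hc).trans (rch_adj (by
      rw [← he0eq]; exact mem_union_right _ (mem_singleton_self _)) hcb).reachable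
  intro u
  refine rch_closed (A := {z | Rch F s z}) ?_ (rch_refl _ _) (hconn u)
  intro x y hx hadj
  obtain ⟨he, hne⟩ := adj_cases hadj
  by_cases hxy : s(x,y) ∈ X
  · obtain ⟨hd', b', hb'mem, hb'⟩ := mem_filter.mp hxy
    obtain ⟨_, c', hc'mem, hc'⟩ := mem_filter.mp hd'
    have hcb' : c' ≠ b' := fun h => C_B_disj hT hv hc' (h ▸ hb')
    have heq : s(x,y) = s(c', b') := eq_pair hc'mem hb'mem hcb'
    have hy : y ∈ s(c', b') := heq ▸ Sym2.mem_mk_right x y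
    have hc'F : Rch F s c' := rch_mono hTF hc'
    have hb'F : Rch F s b' := hsb.trans (rch_mono hHF (hb.symm.trans hb'))
    rcases Sym2.mem_iff.mp hy with h | h
    · exact h ▸ hc'F
    · exact h ▸ hb'F
  · exact hx.trans (rch_adj (mem_union_left _ (mem_sdiff.mpr ⟨he, hxy⟩)) hne).reachable

include hT hv in
lemma Xcut_isMinCutSet (hconn : ∀ u, Rch E s u) : IsMinCutSet G s X := by
  refine ⟨⟨Xcut_subset_E, ⟨v, not_rch_sdiff_Xcut hT hv⟩⟩, ?_⟩
  rintro Y hY ⟨hYE, u, hu⟩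
  obtain ⟨e0, he0X, he0Y⟩ := exists_of_ssubset hY
  apply hu
  refine rch_mono ?_ (full_conn hT hv hconn he0X u)
  intro e he
  rcases mem_union.mp he with h | h
  · exact mem_sdiff.mpr ⟨(mem_sdiff.mp h).1, fun hy => (mem_sdiff.mp h).2 (hY.subset hy)⟩
  · rw [mem_singleton] at h; subst h
    exact mem_sdiff.mpr ⟨Xcut_subset_E he0X, he0Y⟩

include hT hv in
lemma Xcut_unique {X' : Finset (Sym2 V)} (hmcs : IsMinCutSet G s X')
    (hTX : T ⊆ E \ X')
    (hcond : ∀ e ∈ X', ∃ u ∈ e, Rch T s u)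
    (hdis : ¬ Rch (E \ X') s v) : X' = X := by
  have hA' : ∀ x y, x ∈ {z | Rch (G.edgeFinset \ X') s z} →
      (SimpleGraph.fromEdgeSet (↑(G.edgeFinset \ del G s T) : Set (Sym2 V))).Adj x y →
      y ∈ {z | Rch (G.edgeFinset \ X') s z} := by
    intro x y hx hadj
    obtain ⟨he, hne⟩ := adj_cases hadj
    rw [mem_sdiff] at he
    by_cases hx' : s(x,y) ∈ X'
    · exfalso
      obtain ⟨c, hcmem, hc⟩ := hcond _ hx'
      refine he.2 ?_
      rw [del, mem_filter]
      exact ⟨mem_sdiff.mpr ⟨he.1, fun ht => (mem_sdiff.mp (hTX ht)).2 hx'⟩, c, hcmem, hc⟩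
    · exact hx.trans (rch_adj (mem_sdiff.mpr ⟨he.1, hx'⟩) hne).reachable
  have hBdisj : ∀ u, Rch (G.edgeFinset \ del G s T) v u → ¬ Rch (G.edgeFinset \ X') s u := by
    intro u hB hA
    exact hdis (rch_closed (A := {z | Rch (G.edgeFinset \ X') s z}) hA' hA hB.symm)
  have hsub : X ⊆ X' := by
    intro e he
    obtain ⟨hd, b, hbmem, hb⟩ := mem_filter.mp he
    obtain ⟨het, c, hcmem, hc⟩ := mem_filter.mp hd
    have hcb : c ≠ b := fun h => C_B_disj hT hv hc (h ▸ hb)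
    have heq : e = s(c,b) := eq_pair hcmem hbmem hcb
    by_contra hnot
    have heE : e ∈ G.edgeFinset \ X' := mem_sdiff.mpr ⟨(mem_sdiff.mp het).1, hnot⟩
    exact hBdisj b hb ((rch_mono hTX hc).trans (rch_adj (heq ▸ heE) hcb).reachable)
  by_contra hne
  exact hmcs.2 X (Finset.ssubset_iff_subset_ne.mpr ⟨hsub, fun h => hne h.symm⟩)
    ⟨Xcut_subset_E, v, not_rch_sdiff_Xcut hT hv⟩

end Fixed
end RiskAux

/-- The risk formula: if every vertex is connected to the source when all edges
work, then the weighted SAIDI index is the sum of the risks of all minimal cut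
sets of `G`. -/
theorem risk_formula {V : Type*} [Fintype V] [DecidableEq V]
    (G : SimpleGraph V) [DecidableRel G.Adj] (s : V)
    (p : Sym2 V → ℝ) (hp : ∀ e ∈ G.edgeFinset, p e ∈ Set.Icc (0 : ℝ) 1)
    (w : V → ℝ) (hw : ∀ v, 0 ≤ w v)
    (hconn : ∀ v : V, G.Reachable s v) :
    SAIDI G s p w =
      ∑ X ∈ G.edgeFinset.powerset.filter (IsMinCutSet G s), risk G s p w X := by
    classical
  -- notation
  have hconn' : ∀ u, RiskAux.Rch G.edgeFinset s u := by
    intro u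
    show (SimpleGraph.fromEdgeSet (↑G.edgeFinset : Set (Sym2 V))).Reachable s u
    rw [SimpleGraph.coe_edgeFinset, SimpleGraph.fromEdgeSet_edgeSet]
    exact hconn u
  -- Step 1: SAIDI as a double sum with indicator
  have hdp_s : disconProb G s p s = 0 := by
    rw [disconProb]
    refine Finset.sum_eq_zero fun S _ => ?_
    rw [if_pos (SimpleGraph.Reachable.refl s), mul_zero]
  have step1 : SAIDI G s p w = ∑ v : V, w v * disconProb G s p v := by
    rw [SAIDI]
    exact Finset.sum_filter_of_ne fun v _ hne heq => hne (by rw [heq, hdp_s, mul_zero])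
  have step2 : SAIDI G s p w = ∑ S ∈ G.edgeFinset.powerset, ∑ v : V,
      (if ¬ (SimpleGraph.fromEdgeSet (↑S : Set (Sym2 V))).Reachable s v
       then ((∏ e ∈ S, (1 - p e)) * ∏ e ∈ G.edgeFinset \ S, p e) * w v else 0) := by
    rw [step1]
    simp only [disconProb, Finset.mul_sum]
    rw [Finset.sum_comm]
    refine Finset.sum_congr rfl fun S _ => Finset.sum_congr rfl fun v _ => ?_
    by_cases h : (SimpleGraph.fromEdgeSet (↑S : Set (Sym2 V))).Reachable s v
    · rw [if_pos h, if_neg (not_not_intro h)]; ring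
    · rw [if_neg h, if_pos h]; ring
  -- Step 2: risk as a double sum with indicator
  have risk_eq : ∀ X : Finset (Sym2 V), X ⊆ G.edgeFinset →
      risk G s p w X = ∑ S ∈ G.edgeFinset.powerset, ∑ v : V,
        (if S ⊆ G.edgeFinset \ X ∧ (∀ e ∈ X, ∃ u, u ∈ e ∧
              (SimpleGraph.fromEdgeSet ((S : Finset (Sym2 V)) : Set (Sym2 V))).Reachable s u) ∧
            ¬ (SimpleGraph.fromEdgeSet (↑(G.edgeFinset \ X) : Set (Sym2 V))).Reachable s v
         then ((∏ e ∈ S, (1 - p e)) * ∏ e ∈ G.edgeFinset \ S, p e) * w v else 0) := by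
    intro X hXE
    have hsplit : ∀ S : Finset (Sym2 V),
        (∑ v : V, (if S ⊆ G.edgeFinset \ X ∧ (∀ e ∈ X, ∃ u, u ∈ e ∧
              (SimpleGraph.fromEdgeSet ((S : Finset (Sym2 V)) : Set (Sym2 V))).Reachable s u) ∧
            ¬ (SimpleGraph.fromEdgeSet (↑(G.edgeFinset \ X) : Set (Sym2 V))).Reachable s v
           then ((∏ e ∈ S, (1 - p e)) * ∏ e ∈ G.edgeFinset \ S, p e) * w v else 0))
        = (if S ⊆ G.edgeFinset \ X ∧ (∀ e ∈ X, ∃ u, u ∈ e ∧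
              (SimpleGraph.fromEdgeSet ((S : Finset (Sym2 V)) : Set (Sym2 V))).Reachable s u)
           then (∑ v : V,
             (if ¬ (SimpleGraph.fromEdgeSet (↑(G.edgeFinset \ X) : Set (Sym2 V))).Reachable s v
              then ((∏ e ∈ S, (1 - p e)) * ∏ e ∈ G.edgeFinset \ S, p e) * w v else 0))
           else 0) := by
      intro S
      by_cases hP : S ⊆ G.edgeFinset \ X ∧ (∀ e ∈ X, ∃ u, u ∈ e ∧
          (SimpleGraph.fromEdgeSet ((S : Finset (Sym2 V)) : Set (Sym2 V))).Reachable s u)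
      · rw [if_pos hP]
        refine Finset.sum_congr rfl fun v _ => ?_
        by_cases hd : ¬ (SimpleGraph.fromEdgeSet (↑(G.edgeFinset \ X) : Set (Sym2 V))).Reachable s v
        · rw [if_pos ⟨hP.1, hP.2, hd⟩, if_pos hd]
        · rw [if_neg fun h => hd h.2.2, if_neg hd]
      · rw [if_neg hP]
        exact Finset.sum_eq_zero fun v _ => if_neg fun h => hP ⟨h.1, h.2.1⟩
    rw [Finset.sum_congr rfl fun S _ => hsplit S]
    erw [← Finset.sum_filter]
    have hset : G.edgeFinset.powerset.filter
        (fun S : Finset (Sym2 V) => S ⊆ G.edgeFinset \ X ∧ (∀ e ∈ X, ∃ u, u ∈ e ∧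
            (SimpleGraph.fromEdgeSet ((S : Finset (Sym2 V)) : Set (Sym2 V))).Reachable s u))
        = (G.edgeFinset \ X).powerset.filter
          (fun S : Finset (Sym2 V) => ∀ e ∈ X, ∃ u, u ∈ e ∧
            (SimpleGraph.fromEdgeSet ((S : Finset (Sym2 V)) : Set (Sym2 V))).Reachable s u) := by
      ext S
      simp only [mem_filter, mem_powerset]
      constructor
      · rintro ⟨-, h1, h2⟩; exact ⟨h1, h2⟩
      · rintro ⟨h1, h2⟩; exact ⟨h1.trans sdiff_subset, h1, h2⟩
    rw [Finset.filter_congr_decidable] at hset ⊢; rw [hset, risk, Dcut, Finset.sum_mul, Finset.sum_mul]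
    refine Finset.sum_congr rfl fun S hSmem => ?_
    rw [mem_filter, mem_powerset] at hSmem
    have hdisj : Disjoint ((G.edgeFinset \ X) \ S) X :=
      Finset.disjoint_left.mpr fun a ha hX => (mem_sdiff.mp (mem_sdiff.mp ha).1).2 hX
    have hprod : (∏ e ∈ (G.edgeFinset \ X) \ S, p e) * ∏ e ∈ X, p e
        = ∏ e ∈ G.edgeFinset \ S, p e := by
      rw [← Finset.prod_union hdisj]
      refine Finset.prod_congr ?_ fun _ _ => rfl
      ext a
      simp only [mem_union, mem_sdiff]
      constructor
      · rintro (⟨⟨h1, h2⟩, h3⟩ | h)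
        · exact ⟨h1, h3⟩
        · exact ⟨hXE h, fun hs => (mem_sdiff.mp (hSmem.1 hs)).2 h⟩
      · rintro ⟨h1, h2⟩
        by_cases hx : a ∈ X
        · exact Or.inr hx
        · exact Or.inl ⟨⟨h1, hx⟩, h2⟩
    rw [Finset.mul_sum, Finset.sum_filter]
    refine Finset.sum_congr rfl fun v _ => ?_
    by_cases hd : ¬ (SimpleGraph.fromEdgeSet (↑(G.edgeFinset \ X) : Set (Sym2 V))).Reachable s v
    · rw [if_pos hd, if_pos hd, ← hprod]; ring
    · rw [if_neg hd, if_neg hd]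
  -- Step 3: the key counting identity
  have key : ∀ S ∈ G.edgeFinset.powerset, ∀ v : V,
      (∑ X ∈ G.edgeFinset.powerset,
        (if IsMinCutSet G s X ∧ S ⊆ G.edgeFinset \ X ∧ (∀ e ∈ X, ∃ u, u ∈ e ∧
              (SimpleGraph.fromEdgeSet ((S : Finset (Sym2 V)) : Set (Sym2 V))).Reachable s u) ∧
            ¬ (SimpleGraph.fromEdgeSet (↑(G.edgeFinset \ X) : Set (Sym2 V))).Reachable s v
         then ((∏ e ∈ S, (1 - p e)) * ∏ e ∈ G.edgeFinset \ S, p e) * w v else 0))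
      = (if ¬ (SimpleGraph.fromEdgeSet (↑S : Set (Sym2 V))).Reachable s v
         then ((∏ e ∈ S, (1 - p e)) * ∏ e ∈ G.edgeFinset \ S, p e) * w v else 0) := by
    intro S hS v
    rw [mem_powerset] at hS
    by_cases hv : (SimpleGraph.fromEdgeSet (↑S : Set (Sym2 V))).Reachable s v
    · rw [if_neg (not_not_intro hv)]
      refine Finset.sum_eq_zero fun X _ => if_neg ?_
      rintro ⟨-, hSX, -, hdis⟩
      exact hdis (RiskAux.rch_mono hSX hv)
    · rw [if_pos hv]
      have hmem : RiskAux.Xcut G s S v ∈ G.edgeFinset.powerset :=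
        mem_powerset.mpr RiskAux.Xcut_subset_E
      have h0 : ∀ X ∈ G.edgeFinset.powerset, X ≠ RiskAux.Xcut G s S v →
          (if IsMinCutSet G s X ∧ S ⊆ G.edgeFinset \ X ∧ (∀ e ∈ X, ∃ u, u ∈ e ∧
                (SimpleGraph.fromEdgeSet ((S : Finset (Sym2 V)) : Set (Sym2 V))).Reachable s u) ∧
              ¬ (SimpleGraph.fromEdgeSet (↑(G.edgeFinset \ X) : Set (Sym2 V))).Reachable s v
           then ((∏ e ∈ S, (1 - p e)) * ∏ e ∈ G.edgeFinset \ S, p e) * w v else 0) = 0 := by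
        intro X _ hne
        refine if_neg ?_
        rintro ⟨h1, h2, h3, h4⟩
        exact hne (RiskAux.Xcut_unique hS hv h1 h2 h3 h4)
      rw [Finset.sum_eq_single_of_mem _ hmem h0,
        if_pos ⟨RiskAux.Xcut_isMinCutSet hS hv hconn', RiskAux.T_subset_sdiff_Xcut hS,
          RiskAux.Xcut_cond, RiskAux.not_rch_sdiff_Xcut hS hv⟩]
  -- Step 4: assemble
  have RHS_eq : (∑ X ∈ G.edgeFinset.powerset.filter (IsMinCutSet G s), risk G s p w X)
      = ∑ S ∈ G.edgeFinset.powerset, ∑ v : V, ∑ X ∈ G.edgeFinset.powerset,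
        (if IsMinCutSet G s X ∧ S ⊆ G.edgeFinset \ X ∧ (∀ e ∈ X, ∃ u, u ∈ e ∧
              (SimpleGraph.fromEdgeSet ((S : Finset (Sym2 V)) : Set (Sym2 V))).Reachable s u) ∧
            ¬ (SimpleGraph.fromEdgeSet (↑(G.edgeFinset \ X) : Set (Sym2 V))).Reachable s v
         then ((∏ e ∈ S, (1 - p e)) * ∏ e ∈ G.edgeFinset \ S, p e) * w v else 0) := by
    rw [Finset.sum_filter]
    have h1 : ∀ X ∈ G.edgeFinset.powerset,
        (if IsMinCutSet G s X then risk G s p w X else 0)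
        = ∑ S ∈ G.edgeFinset.powerset, ∑ v : V,
          (if IsMinCutSet G s X ∧ S ⊆ G.edgeFinset \ X ∧ (∀ e ∈ X, ∃ u, u ∈ e ∧
                (SimpleGraph.fromEdgeSet ((S : Finset (Sym2 V)) : Set (Sym2 V))).Reachable s u) ∧
              ¬ (SimpleGraph.fromEdgeSet (↑(G.edgeFinset \ X) : Set (Sym2 V))).Reachable s v
           then ((∏ e ∈ S, (1 - p e)) * ∏ e ∈ G.edgeFinset \ S, p e) * w v else 0) := by
      intro X hX
      by_cases hm : IsMinCutSet G s X
      · rw [if_pos hm, risk_eq X (mem_powerset.mp hX)]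
        refine Finset.sum_congr rfl fun S _ => Finset.sum_congr rfl fun v _ => ?_
        by_cases h : S ⊆ G.edgeFinset \ X ∧ (∀ e ∈ X, ∃ u, u ∈ e ∧
              (SimpleGraph.fromEdgeSet ((S : Finset (Sym2 V)) : Set (Sym2 V))).Reachable s u) ∧
            ¬ (SimpleGraph.fromEdgeSet (↑(G.edgeFinset \ X) : Set (Sym2 V))).Reachable s v
        · rw [if_pos h, if_pos ⟨hm, h⟩]
        · rw [if_neg h, if_neg fun hh => h hh.2]
      · rw [if_neg hm]
        symm
        refine Finset.sum_eq_zero fun S _ => Finset.sum_eq_zero fun v _ => if_neg fun h => hm h.1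
    rw [Finset.sum_congr rfl h1, Finset.sum_comm]
    exact Finset.sum_congr rfl fun S _ => Finset.sum_comm
  rw [step2, RHS_eq]
  exact Finset.sum_congr rfl fun S hS => Finset.sum_congr rfl fun v _ => (key S hS v).symm
end

section
/- Let n ≥ 1, p ∈ (0,1] and q = 1 − p. For the ring network with n consumers, the SAIDI index satisfies the closed-form identity: (1/n) · Σ_{k=1}^{n} (1 − q^k)(1 − q^{n+1−k}) = 1 + q^{n+1} − (2/n) · q(1 − q^n)/p. -/
open Finset

/-- Closed form of the ring SAIDI index: for a ring with `n` consumers and edge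
failure probability `p` (working probability `q = 1 - p`),
`(1/n) ∑_{k=1}^n (1 - q^k)(1 - q^{n+1-k}) = 1 + q^{n+1} - (2/n) · q(1 - q^n)/p`. -/
theorem ring_saidi_closed_form (n : ℕ) (hn : 1 ≤ n) (p : ℝ) (hp : p ∈ Set.Ioc (0 : ℝ) 1) :
    (1 / (n : ℝ)) * ∑ k ∈ Icc 1 n, (1 - (1 - p) ^ k) * (1 - (1 - p) ^ (n + 1 - k)) =
      1 + (1 - p) ^ (n + 1) - (2 / (n : ℝ)) * ((1 - p) * (1 - (1 - p) ^ n)) / p := by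
  obtain ⟨hp0, hp1⟩ := hp
  set q : ℝ := 1 - p with hq
  have hqne : q ≠ 1 := by simp [hq]; linarith
  have hpne : p ≠ 0 := ne_of_gt hp0
  have hnne : (n : ℝ) ≠ 0 := by positivity
  have hgeom : ∑ k ∈ Icc 1 n, q ^ k = q * (1 - q ^ n) / p := by
    rw [show Icc 1 n = Ico 1 (n+1) from rfl, Finset.sum_Ico_eq_sum_range]
    simp only [Nat.add_sub_cancel]
    have h1 : ∀ k, q ^ (1 + k) = q * q ^ k := by
      intro k; rw [pow_add, pow_one]
    simp only [h1]
    rw [← Finset.mul_sum, geom_sum_eq hqne]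
    rw [show q - 1 = -p by rw [hq]; ring]
    rw [div_neg, ← neg_div, neg_sub, mul_div_assoc]
  have hrev : ∑ k ∈ Icc 1 n, q ^ (n + 1 - k) = ∑ k ∈ Icc 1 n, q ^ k := by
    apply Finset.sum_nbij' (fun k => n + 1 - k) (fun k => n + 1 - k)
    all_goals intro a ha <;> simp only [Finset.mem_Icc] at * <;> first | omega | (congr 1; omega) | rfl
  have hcross : ∑ k ∈ Icc 1 n, q ^ k * q ^ (n + 1 - k) = n * q ^ (n + 1) := by
    have h1 : ∀ k ∈ Icc 1 n, q ^ k * q ^ (n + 1 - k) = q ^ (n + 1) := by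
      intro k hk
      simp only [Finset.mem_Icc] at hk
      rw [← pow_add]
      congr 1
      omega
    rw [Finset.sum_congr rfl h1, Finset.sum_const, Nat.card_Icc]
    simp [nsmul_eq_mul]
  have hexp : ∑ k ∈ Icc 1 n, (1 - q ^ k) * (1 - q ^ (n + 1 - k)) =
      (n : ℝ) - (∑ k ∈ Icc 1 n, q ^ k) - (∑ k ∈ Icc 1 n, q ^ (n + 1 - k))
        + ∑ k ∈ Icc 1 n, q ^ k * q ^ (n + 1 - k) := by
    have h1 : ∀ k ∈ Icc 1 n, (1 - q ^ k) * (1 - q ^ (n + 1 - k)) =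
        1 - q ^ k - q ^ (n + 1 - k) + q ^ k * q ^ (n + 1 - k) := fun k _ => by ring
    rw [Finset.sum_congr rfl h1, Finset.sum_add_distrib, Finset.sum_sub_distrib,
      Finset.sum_sub_distrib, Finset.sum_const, Nat.card_Icc]
    simp [nsmul_eq_mul]
  rw [hexp, hrev, hgeom, hcross]
  field_simp
  ring
end

section
/- Let n ≥ 1 and for p ∈ (0,1] with q = 1 − p define the normalized ring SAIDI index F̄_ring(n)(p) = (1/n) · Σ_{k=1}^{n} (1 − q^k)(1 − q^{n+1−k}). Then lim_{p → 0⁺} F̄_ring(n)(p) / p² = (n² + 3n + 2)/6; that is, the leading behavior of the ring's unreliability near p = 0 is (1/6)(n² + 3n + 2) p², which grows quadratically in n. -/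
open Finset

private lemma aux_sum_id (n : ℕ) : ∑ k ∈ Icc 1 n, (k : ℝ) = n * (n + 1) / 2 := by
  induction n with
  | zero => simp
  | succ n ih =>
    rw [Finset.sum_Icc_succ_top (by omega), ih]
    push_cast; ring

private lemma aux_sum (n : ℕ) :
    ∑ k ∈ Icc 1 n, (k : ℝ) * (((n : ℝ) + 1) - k) = n * (n + 1) * (n + 2) / 6 := by
  induction n with
  | zero => simp
  | succ n ih =>
    rw [Finset.sum_Icc_succ_top (by omega)]
    have : ∀ k ∈ Icc 1 n, (k : ℝ) * ((((n : ℕ) + 1 : ℕ) : ℝ) + 1 - k)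
        = (k : ℝ) * (((n : ℝ) + 1) - k) + k := by
      intro k _; push_cast; ring
    rw [Finset.sum_congr rfl this, Finset.sum_add_distrib, ih, aux_sum_id]
    push_cast; ring

private lemma slope_tendsto (k : ℕ) :
    Filter.Tendsto (fun p : ℝ => (1 - (1 - p) ^ k) / p)
      (nhdsWithin 0 (Set.Ioi 0)) (nhds (k : ℝ)) := by
  have h1 : HasDerivAt (fun x : ℝ => 1 - x) (-1) 0 := by
    simpa using (hasDerivAt_id (0 : ℝ)).const_sub 1
  have h2 := h1.pow k
  have h3 : HasDerivAt (fun x : ℝ => 1 - (1 - x) ^ k) (k : ℝ) 0 := by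
    have := h2.const_sub 1
    simpa using this
  have h4 := hasDerivAt_iff_tendsto_slope.mp h3
  have h5 : Filter.Tendsto (slope (fun x : ℝ => 1 - (1 - x) ^ k) 0)
      (nhdsWithin 0 (Set.Ioi 0)) (nhds (k : ℝ)) :=
    h4.mono_left (nhdsWithin_mono 0 (fun x hx => ne_of_gt hx))
  refine h5.congr fun p => ?_
  simp [slope_def_field, div_eq_mul_inv, mul_comm]

/-- The leading behavior of the normalized ring SAIDI index near `p = 0`:
`F̄_ring(n)(p) / p² → (n² + 3n + 2)/6` as `p → 0⁺`. -/
theorem ring_saidi_leading (n : ℕ) (hn : 1 ≤ n) :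
    Filter.Tendsto
      (fun p : ℝ =>
        ((1 / (n : ℝ)) * ∑ k ∈ Icc 1 n, (1 - (1 - p) ^ k) * (1 - (1 - p) ^ (n + 1 - k))) / p ^ 2)
      (nhdsWithin 0 (Set.Ioi 0))
      (nhds (((n : ℝ) ^ 2 + 3 * (n : ℝ) + 2) / 6)) := by
  have hne : (n : ℝ) ≠ 0 := by positivity
  have heq : ∀ p : ℝ,
      ((1 / (n : ℝ)) * ∑ k ∈ Icc 1 n, (1 - (1 - p) ^ k) * (1 - (1 - p) ^ (n + 1 - k))) / p ^ 2
      = (1 / (n : ℝ)) * ∑ k ∈ Icc 1 n,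
          ((1 - (1 - p) ^ k) / p) * ((1 - (1 - p) ^ (n + 1 - k)) / p) := by
    intro p
    rw [mul_div_assoc, Finset.sum_div]
    congr 1
    refine Finset.sum_congr rfl fun k _ => ?_
    rw [div_mul_div_comm, ← sq]
  have hsum : Filter.Tendsto
      (fun p : ℝ => (1 / (n : ℝ)) * ∑ k ∈ Icc 1 n,
          ((1 - (1 - p) ^ k) / p) * ((1 - (1 - p) ^ (n + 1 - k)) / p))
      (nhdsWithin 0 (Set.Ioi 0))
      (nhds ((1 / (n : ℝ)) * ∑ k ∈ Icc 1 n, (k : ℝ) * ((n + 1 - k : ℕ) : ℝ))) := by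
    exact Filter.Tendsto.const_mul _ (tendsto_finset_sum _ fun k _ =>
      (slope_tendsto k).mul (slope_tendsto (n + 1 - k)))
  have hval : (1 / (n : ℝ)) * ∑ k ∈ Icc 1 n, (k : ℝ) * ((n + 1 - k : ℕ) : ℝ)
      = ((n : ℝ) ^ 2 + 3 * (n : ℝ) + 2) / 6 := by
    have : ∀ k ∈ Icc 1 n, (k : ℝ) * ((n + 1 - k : ℕ) : ℝ)
        = (k : ℝ) * (((n : ℝ) + 1) - k) := by
      intro k hk
      simp only [mem_Icc] at hk
      congr 1
      rw [Nat.cast_sub (by omega)]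
      push_cast; ring
    rw [Finset.sum_congr rfl this, aux_sum]
    field_simp
    ring
  rw [← hval]
  exact (Filter.Tendsto.congr (fun p => (heq p).symm) hsum)
end

section
/- Let n ≥ 1 and p ∈ [0,1] with q = 1 − p. The (unnormalized) ring SAIDI index satisfies the polynomial identity Σ_{k=1}^{n} (1 − q^k)(1 − q^{n+1−k}) = Σ_{k=2}^{n+1} (−1)^k (k−1) · C(n+2, k+1) · p^k, where C(·,·) denotes the binomial coefficient. -/
open Finset

private lemma ring_saidi_geom (q : ℝ) (n : ℕ) :
    (1 - q) * ∑ k ∈ Icc 1 n, q ^ k = q - q ^ (n + 1) := by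
  induction n with
  | zero => simp
  | succ n ih =>
      rw [Finset.sum_Icc_succ_top (by omega : 1 ≤ n + 1), mul_add, ih]
      ring

private lemma ring_saidi_reflect (q : ℝ) (n : ℕ) :
    ∑ k ∈ Icc 1 n, q ^ (n + 1 - k) = ∑ k ∈ Icc 1 n, q ^ k := by
  rw [← Finset.Ico_add_one_right_eq_Icc, Finset.sum_Ico_eq_sum_range, Finset.sum_Ico_eq_sum_range,
    show n + 1 - 1 = n from by omega]
  rw [← Finset.sum_range_reflect (fun i => q ^ (1 + i)) n]
  refine Finset.sum_congr rfl fun i hi => ?_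
  have hi' := Finset.mem_range.mp hi
  congr 1
  omega

private lemma ring_saidi_binA (x : ℝ) (m : ℕ) :
    ∑ j ∈ range (m + 1), ((m.choose j : ℝ)) * x ^ j = (1 + x) ^ m := by
  rw [add_comm 1 x, add_pow]
  refine Finset.sum_congr rfl fun j hj => ?_
  simp [mul_comm]

private lemma ring_saidi_binB (x : ℝ) (m : ℕ) :
    ∑ j ∈ range (m + 2), (j : ℝ) * (((m + 1).choose j : ℝ)) * x ^ j
      = ((m : ℝ) + 1) * x * (1 + x) ^ m := by
  rw [Finset.sum_range_succ']
  simp only [Nat.cast_zero, zero_mul, pow_zero, mul_one, add_zero]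
  push_cast
  have h : ∀ i ∈ range (m + 1),
      ((i : ℝ) + 1) * (((m + 1).choose (i + 1) : ℝ)) * x ^ (i + 1)
        = ((m : ℝ) + 1) * x * ((m.choose i : ℝ) * x ^ i) := by
    intro i hi
    have hnat : (m + 1).choose (i + 1) * (i + 1) = (m + 1) * m.choose i := by
      rw [← Nat.add_one_mul_choose_eq]
    have hcast : (((m + 1).choose (i + 1) : ℝ)) * ((i : ℝ) + 1)
        = ((m : ℝ) + 1) * (m.choose i : ℝ) := by
      exact_mod_cast congrArg (Nat.cast : ℕ → ℝ) hnat
    rw [pow_succ]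
    linear_combination (x ^ i * x) * hcast
  rw [Finset.sum_congr rfl h, ← Finset.mul_sum, ring_saidi_binA]

/-- Polynomial identity for the (unnormalized) ring SAIDI index:
`∑_{k=1}^n (1 - q^k)(1 - q^{n+1-k}) = ∑_{k=2}^{n+1} (-1)^k (k-1) C(n+2, k+1) p^k`. -/
theorem ring_saidi_poly (n : ℕ) (hn : 1 ≤ n) (p : ℝ) (hp : p ∈ Set.Icc (0 : ℝ) 1) :
    ∑ k ∈ Icc 1 n, (1 - (1 - p) ^ k) * (1 - (1 - p) ^ (n + 1 - k)) =
      ∑ k ∈ Icc 2 (n + 1),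
        (-1 : ℝ) ^ k * ((k : ℝ) - 1) * ((n + 2).choose (k + 1) : ℝ) * p ^ k := by
  rcases eq_or_ne p 0 with rfl | hp0
  · rw [Finset.sum_eq_zero, Finset.sum_eq_zero]
    · intro k hk
      have hk2 : 2 ≤ k := (Finset.mem_Icc.mp hk).1
      rw [zero_pow (by omega : k ≠ 0)]
      ring
    · intro k hk
      simp
  set q : ℝ := 1 - p with hq
  have hL : p * ∑ k ∈ Icc 1 n, (1 - q ^ k) * (1 - q ^ (n + 1 - k))
      = (n : ℝ) * p - 2 * q + 2 * q ^ (n + 1) + (n : ℝ) * p * q ^ (n + 1) := by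
    have h1 : ∑ k ∈ Icc 1 n, (1 - q ^ k) * (1 - q ^ (n + 1 - k))
        = ∑ k ∈ Icc 1 n, (1 - q ^ k - q ^ (n + 1 - k) + q ^ (n + 1)) := by
      refine Finset.sum_congr rfl fun k hk => ?_
      obtain ⟨hk1, hk2⟩ := Finset.mem_Icc.mp hk
      have hpow : q ^ k * q ^ (n + 1 - k) = q ^ (n + 1) := by
        rw [← pow_add]; congr 1; omega
      have he : (1 - q ^ k) * (1 - q ^ (n + 1 - k))
          = 1 - q ^ k - q ^ (n + 1 - k) + q ^ k * q ^ (n + 1 - k) := by ring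
      rw [he, hpow]
    rw [h1]
    have h2 : ∑ k ∈ Icc 1 n, (1 - q ^ k - q ^ (n + 1 - k) + q ^ (n + 1))
        = (n : ℝ) * (1 + q ^ (n + 1)) - (∑ k ∈ Icc 1 n, q ^ k)
          - ∑ k ∈ Icc 1 n, q ^ (n + 1 - k) := by
      rw [Finset.sum_add_distrib, Finset.sum_sub_distrib, Finset.sum_sub_distrib,
        Finset.sum_const, Finset.sum_const, Nat.card_Icc]
      simp only [Nat.add_sub_cancel, nsmul_eq_mul]
      ring
    rw [h2, ring_saidi_reflect]
    have hgeom := ring_saidi_geom q n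
    have hpq : (1 : ℝ) - q = p := by rw [hq]; ring
    rw [hpq] at hgeom
    linear_combination (-2 : ℝ) * hgeom
  have hR : p * ∑ k ∈ Icc 2 (n + 1),
        (-1 : ℝ) ^ k * ((k : ℝ) - 1) * ((n + 2).choose (k + 1) : ℝ) * p ^ k
      = ((n : ℝ) + 2) * p * q ^ (n + 1) + ((n : ℝ) + 2) * p + 2 * q ^ (n + 2) - 2 := by
    set x : ℝ := -p with hx
    have h1 : p * ∑ k ∈ Icc 2 (n + 1),
          (-1 : ℝ) ^ k * ((k : ℝ) - 1) * ((n + 2).choose (k + 1) : ℝ) * p ^ k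
        = -∑ k ∈ Icc 2 (n + 1),
            (((k : ℝ) + 1) - 2) * ((n + 2).choose (k + 1) : ℝ) * x ^ (k + 1) := by
      rw [Finset.mul_sum, ← Finset.sum_neg_distrib]
      refine Finset.sum_congr rfl fun k hk => ?_
      have hxp : x ^ (k + 1) = (-1 : ℝ) ^ (k + 1) * p ^ (k + 1) := by
        rw [hx, show (-p : ℝ) = (-1) * p from by ring, mul_pow]
      rw [hxp, pow_succ, pow_succ]
      ring
    rw [h1]
    have h2 : ∑ k ∈ Icc 2 (n + 1),
          (((k : ℝ) + 1) - 2) * ((n + 2).choose (k + 1) : ℝ) * x ^ (k + 1)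
        = ∑ i ∈ range n, (((i : ℝ) + 3) - 2) * ((n + 2).choose (i + 3) : ℝ) * x ^ (i + 3) := by
      rw [← Finset.Ico_add_one_right_eq_Icc, Finset.sum_Ico_eq_sum_range]
      have hcard : n + 1 + 1 - 2 = n := by omega
      rw [hcard]
      refine Finset.sum_congr rfl fun i hi => ?_
      have e : 2 + i + 1 = i + 3 := by omega
      rw [e]
      push_cast
      ring
    rw [h2]
    have h3 : ∑ j ∈ range (n + 3), ((j : ℝ) - 2) * ((n + 2).choose j : ℝ) * x ^ j
        = (∑ i ∈ range n, (((i : ℝ) + 3) - 2) * ((n + 2).choose (i + 3) : ℝ) * x ^ (i + 3))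
          - ((n : ℝ) + 2) * x - 2 := by
      rw [Finset.sum_range_succ', Finset.sum_range_succ', Finset.sum_range_succ']
      have hc : ∀ i ∈ range n,
          (((i + 1 + 1 + 1 : ℕ) : ℝ) - 2) * ((n + 2).choose (i + 1 + 1 + 1) : ℝ)
              * x ^ (i + 1 + 1 + 1)
            = (((i : ℝ) + 3) - 2) * ((n + 2).choose (i + 3) : ℝ) * x ^ (i + 3) := by
        intro i _
        have e : i + 1 + 1 + 1 = i + 3 := by omega
        rw [e]
        push_cast
        ring
      rw [Finset.sum_congr rfl hc]
      rw [Nat.choose_zero_right, Nat.choose_one_right]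
      push_cast
      ring
    have h4 : ∑ j ∈ range (n + 3), ((j : ℝ) - 2) * ((n + 2).choose j : ℝ) * x ^ j
        = ((n : ℝ) + 2) * x * (1 + x) ^ (n + 1) - 2 * (1 + x) ^ (n + 2) := by
      have hsplit : ∀ j ∈ range (n + 3),
          ((j : ℝ) - 2) * ((n + 2).choose j : ℝ) * x ^ j
            = (j : ℝ) * ((n + 2).choose j : ℝ) * x ^ j
              - 2 * (((n + 2).choose j : ℝ) * x ^ j) := by
        intro j _; ring
      rw [Finset.sum_congr rfl hsplit, Finset.sum_sub_distrib, ← Finset.mul_sum]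
      have hB := ring_saidi_binB x (n + 1)
      have hA := ring_saidi_binA x (n + 2)
      rw [show n + 1 + 2 = n + 3 from by omega] at hB
      rw [show n + 2 + 1 = n + 3 from by omega] at hA
      push_cast at hB ⊢
      rw [hB, hA]
      ring
    have hval : ∑ i ∈ range n, (((i : ℝ) + 3) - 2) * ((n + 2).choose (i + 3) : ℝ) * x ^ (i + 3)
        = ((n : ℝ) + 2) * x * (1 + x) ^ (n + 1) - 2 * (1 + x) ^ (n + 2)
          + ((n : ℝ) + 2) * x + 2 := by
      rw [h4] at h3
      linarith [h3]
    rw [hval]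
    have hx1 : 1 + x = q := by rw [hx, hq]; ring
    rw [hx1, hx]
    ring
  have key : p * ∑ k ∈ Icc 1 n, (1 - q ^ k) * (1 - q ^ (n + 1 - k))
      = p * ∑ k ∈ Icc 2 (n + 1),
          (-1 : ℝ) ^ k * ((k : ℝ) - 1) * ((n + 2).choose (k + 1) : ℝ) * p ^ k := by
    rw [hL, hR]
    have hq1 : q ^ (n + 2) = q ^ (n + 1) * q := by rw [pow_succ]
    rw [hq1, hq]
    ring
  exact mul_left_cancel₀ hp0 key
end

section
/- Among all trees on the vertex set {s, v_1, …, v_n} with source s, in which each edge fails independently with probability p, the star (every v_i adjacent to s) minimizes the SAIDI index for every p ∈ [0,1]: for every such tree T and every p ∈ [0,1], F_T(p) ≥ n·p = F_star(p), and the inequality is strict for every p ∈ (0,1) whenever T is not the star. -/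
open Finset

/-- The SAIDI polynomial of a tree with source `s` and equal edge failure
probability `p`: `F_T(p) = ∑_{v ≠ s} (1 - (1-p)^{dist(s,v)})`. -/
noncomputable def treeSAIDI {V : Type*} [Fintype V] [DecidableEq V]
    (T : SimpleGraph V) (s : V) (p : ℝ) : ℝ :=
  ∑ v ∈ univ.filter (· ≠ s), (1 - (1 - p) ^ (T.dist s v))

lemma dist_pos_of_ne' {V : Type*} (T : SimpleGraph V) (hT : T.Connected)
    {s v : V} (hv : v ≠ s) : 1 ≤ T.dist s v := by
  have h := (hT s v).dist_eq_zero_iff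
  rcases Nat.eq_zero_or_pos (T.dist s v) with h0 | h1
  · exact absurd (h.mp h0).symm hv
  · exact h1

lemma two_le_dist_of_not_adj {V : Type*} (T : SimpleGraph V) (hT : T.Connected)
    {s v : V} (hv : v ≠ s) (hadj : ¬ T.Adj s v) : 2 ≤ T.dist s v := by
  have h1 := dist_pos_of_ne' T hT hv
  rcases Nat.lt_or_ge (T.dist s v) 2 with h2 | h2
  · have h : T.dist s v = 1 := by omega
    exact absurd (SimpleGraph.dist_eq_one_iff_adj.mp h) hadj
  · exact h2

/-- Among all trees on `n + 1` vertices with source `s`, the star minimizes the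
SAIDI index for every `p ∈ [0,1]`: `F_T(p) ≥ n·p = F_star(p)`, with strict
inequality for `p ∈ (0,1)` whenever `T` is not the star. -/
theorem star_most_reliable_tree {V : Type*} [Fintype V] [DecidableEq V] (n : ℕ)
    (hcard : Fintype.card V = n + 1) (s : V)
    (T : SimpleGraph V) (hT : T.IsTree) :
    (∀ p ∈ Set.Icc (0 : ℝ) 1, (n : ℝ) * p ≤ treeSAIDI T s p) ∧
      ((¬ ∀ v : V, v ≠ s → T.Adj s v) →
        ∀ p ∈ Set.Ioo (0 : ℝ) 1, (n : ℝ) * p < treeSAIDI T s p) := by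
  have hconn := hT.isConnected
  have hcardf : (univ.filter (· ≠ s)).card = n := by
    rw [Finset.filter_ne', Finset.card_erase_of_mem (mem_univ s), Finset.card_univ, hcard]
    omega
  have hnp : ∀ p : ℝ, (n : ℝ) * p = ∑ _v ∈ univ.filter (· ≠ s), p := by
    intro p
    rw [Finset.sum_const, hcardf, nsmul_eq_mul]
  constructor
  · intro p hp
    rw [treeSAIDI, hnp p]
    apply Finset.sum_le_sum
    intro v hv
    simp only [mem_filter] at hv
    have hd := dist_pos_of_ne' T hconn hv.2
    have h1 : (1 - p) ^ (T.dist s v) ≤ (1 - p) ^ 1 :=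
      pow_le_pow_of_le_one (by linarith [hp.2]) (by linarith [hp.1]) hd
    rw [pow_one] at h1
    linarith
  · intro hnot p hp
    push_neg at hnot
    obtain ⟨w, hw, hwadj⟩ := hnot
    rw [treeSAIDI, hnp p]
    apply Finset.sum_lt_sum
    · intro v hv
      simp only [mem_filter] at hv
      have hd := dist_pos_of_ne' T hconn hv.2
      have h1 : (1 - p) ^ (T.dist s v) ≤ (1 - p) ^ 1 :=
        pow_le_pow_of_le_one (by linarith [hp.2.le]) (by linarith [hp.1.le]) hd
      rw [pow_one] at h1
      linarith
    · refine ⟨w, by simp [hw], ?_⟩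
      have hd := two_le_dist_of_not_adj T hconn hw hwadj
      have h1 : (1 - p) ^ (T.dist s w) < (1 - p) ^ 1 := by
        apply pow_lt_pow_right_of_lt_one₀ (by linarith [hp.2]) (by linarith [hp.1]) (by omega)
      rw [pow_one] at h1
      linarith
end

section
/- Among all trees on the vertex set {s, v_1, …, v_n} with source s, in which each edge fails independently with probability p, the path (with s as an endpoint) maximizes the SAIDI index for every p ∈ [0,1]: for every such tree T and every p ∈ [0,1], F_T(p) ≤ Σ_{k=1}^{n} (1 − q^k) = F_path(n)(p), where q = 1 − p. (This follows because in any tree with n non-source vertices, for each k ≤ n there are at least k non-source vertices within distance k of s.) -/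
open Finset

section Aux

variable {V : Type*} [Fintype V] [DecidableEq V]

/-- If `dist s v = d + 1` then there is a vertex at distance exactly `d`. -/
lemma exists_dist_pred {G : SimpleGraph V} (hc : G.Connected) {s v : V} {d : ℕ}
    (hd : G.dist s v = d + 1) : ∃ w, G.dist s w = d := by
  have hvs : v ≠ s := by
    rintro rfl
    simp [SimpleGraph.dist_self] at hd
  obtain ⟨p, hp⟩ := hc.exists_walk_length_eq_dist s v
  obtain ⟨u, h, q, hq⟩ := SimpleGraph.Walk.exists_eq_cons_of_ne hvs p.reverse
  have hql : q.length = d := by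
    have := congrArg SimpleGraph.Walk.length hq
    simp [SimpleGraph.Walk.length_reverse, hp, hd] at this
    omega
  refine ⟨u, le_antisymm ?_ ?_⟩
  · calc G.dist s u ≤ q.reverse.length := SimpleGraph.dist_le _
    _ = d := by simp [hql]
  · have htri := hc.dist_triangle (u := s) (v := u) (w := v)
    have huv : G.dist u v = 1 := SimpleGraph.dist_eq_one_iff_adj.mpr h.symm
    omega

/-- If `i ≤ dist s v` then there is a vertex at distance exactly `i`. -/
lemma exists_dist_eq_aux {G : SimpleGraph V} (hc : G.Connected) (s : V) :
    ∀ j (v : V) (i : ℕ), G.dist s v = i + j → ∃ w, G.dist s w = i := by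
  intro j
  induction j with
  | zero => exact fun v i h => ⟨v, h⟩
  | succ j ih =>
    intro v i h
    obtain ⟨w, hw⟩ := exists_dist_pred hc (s := s) (v := v) (d := i + j) (by omega)
    exact ih w i hw

/-- In a connected graph, at least `min (k+1) (card V)` vertices are within
distance `k` of `s`. -/
lemma card_ball_ge {G : SimpleGraph V} (hc : G.Connected) (s : V) (k : ℕ) :
    min (k + 1) (Fintype.card V) ≤ (univ.filter (fun v => G.dist s v ≤ k)).card := by
  induction k with
  | zero =>
    have hs : s ∈ univ.filter (fun v => G.dist s v ≤ 0) := by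
      simp [SimpleGraph.dist_self]
    have := Finset.card_pos.mpr ⟨s, hs⟩
    omega
  | succ k ih =>
    by_cases hex : ∃ w, G.dist s w = k + 1
    · obtain ⟨w, hw⟩ := hex
      have hsub : insert w (univ.filter (fun v => G.dist s v ≤ k)) ⊆
          univ.filter (fun v => G.dist s v ≤ k + 1) := by
        intro x hx
        simp only [Finset.mem_insert, Finset.mem_filter, Finset.mem_univ, true_and] at hx ⊢
        rcases hx with rfl | hx
        · omega
        · omega
      have hwn : w ∉ univ.filter (fun v => G.dist s v ≤ k) := by
        simp [hw]
      have hcard := Finset.card_le_card hsub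
      rw [Finset.card_insert_of_notMem hwn] at hcard
      have hle : (univ.filter (fun v => G.dist s v ≤ k + 1)).card ≤ Fintype.card V :=
        Finset.card_filter_le _ _
      omega
    · push_neg at hex
      have hall : ∀ v : V, G.dist s v ≤ k + 1 := by
        intro v
        by_contra hv
        push_neg at hv
        obtain ⟨j, hj⟩ : ∃ j, G.dist s v = (k + 1) + j := ⟨G.dist s v - (k + 1), by omega⟩
        obtain ⟨w, hw⟩ := exists_dist_eq_aux hc s j v (k + 1) hj
        exact hex w hw
      have : univ.filter (fun v => G.dist s v ≤ k + 1) = univ := by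
        ext v; simp [hall v]
      rw [this, Finset.card_univ]
      omega

/-- Rearrangement-type lemma: if for every `1 ≤ k ≤ |A|` at least `k` elements
of `A` have `g`-value at most `k`, then for monotone `f` the sum of `f ∘ g` over
`A` is at most `∑_{k=1}^{|A|} f k`. -/
lemma sum_mono_le_sum_Icc {α : Type*} [DecidableEq α] (f : ℕ → ℝ) (hf : Monotone f) :
    ∀ (n : ℕ) (A : Finset α) (g : α → ℕ), A.card = n →
      (∀ k, 1 ≤ k → k ≤ n → k ≤ (A.filter (fun a => g a ≤ k)).card) →
      ∑ a ∈ A, f (g a) ≤ ∑ k ∈ Icc 1 n, f k := by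
  intro n
  induction n with
  | zero =>
    intro A g hA _
    rw [Finset.card_eq_zero.mp hA]
    simp
  | succ n ih =>
    intro A g hA h
    have hAne : A.Nonempty := Finset.card_pos.mp (by omega)
    -- every element has g-value at most n+1
    have hbound : ∀ a ∈ A, g a ≤ n + 1 := by
      have h1 := h (n + 1) (by omega) le_rfl
      have h2 : (A.filter (fun a => g a ≤ n + 1)).card ≤ A.card :=
        Finset.card_filter_le _ _
      have heq : A.filter (fun a => g a ≤ n + 1) = A :=
        Finset.eq_of_subset_of_card_le (Finset.filter_subset _ _) (by omega)
      intro a ha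
      have hmem : a ∈ A.filter (fun a => g a ≤ n + 1) := by rw [heq]; exact ha
      exact (Finset.mem_filter.mp hmem).2
    obtain ⟨a, haA, hamax⟩ := Finset.exists_max_image A g hAne
    have hA' : (A.erase a).card = n := by
      rw [Finset.card_erase_of_mem haA]; omega
    have h' : ∀ k, 1 ≤ k → k ≤ n →
        k ≤ ((A.erase a).filter (fun x => g x ≤ k)).card := by
      intro k hk1 hkn
      by_cases hga : g a ≤ k
      · have : (A.erase a).filter (fun x => g x ≤ k) = A.erase a := by
          apply Finset.filter_true_of_mem
          intro x hx
          exact le_trans (hamax x (Finset.mem_of_mem_erase hx)) hga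
        rw [this, hA']
        omega
      · have : (A.erase a).filter (fun x => g x ≤ k) =
            A.filter (fun x => g x ≤ k) := by
          ext x
          simp only [Finset.mem_filter, Finset.mem_erase]
          constructor
          · rintro ⟨⟨_, hx⟩, hg⟩; exact ⟨hx, hg⟩
          · rintro ⟨hx, hg⟩
            refine ⟨⟨?_, hx⟩, hg⟩
            rintro rfl; exact hga hg
        rw [this]
        exact h k hk1 (by omega)
    have hsum : ∑ x ∈ A, f (g x) = f (g a) + ∑ x ∈ A.erase a, f (g x) :=
      (Finset.add_sum_erase A (fun x => f (g x)) haA).symm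
    rw [hsum]
    have hIcc : ∑ k ∈ Icc 1 (n + 1), f k = ∑ k ∈ Icc 1 n, f k + f (n + 1) :=
      Finset.sum_Icc_succ_top (by omega) f
    rw [hIcc]
    have h1 : f (g a) ≤ f (n + 1) := hf (hbound a haA)
    have h2 := ih (A.erase a) g hA' h'
    linarith

end Aux

/-- Among all trees on `n + 1` vertices with source `s`, the path with `s` as an
endpoint maximizes the SAIDI index for every `p ∈ [0,1]`:
`F_T(p) ≤ ∑_{k=1}^n (1 - q^k) = F_path(n)(p)`. -/
theorem path_least_reliable_tree {V : Type*} [Fintype V] [DecidableEq V] (n : ℕ)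
    (hcard : Fintype.card V = n + 1) (s : V)
    (T : SimpleGraph V) (hT : T.IsTree) :
    ∀ p ∈ Set.Icc (0 : ℝ) 1,
      treeSAIDI T s p ≤ ∑ k ∈ Icc 1 n, (1 - (1 - p) ^ k) := by
  intro p hp
  obtain ⟨hp0, hp1⟩ := hp
  have hq0 : (0 : ℝ) ≤ 1 - p := by linarith
  have hq1 : (1 : ℝ) - p ≤ 1 := by linarith
  have hf : Monotone (fun k : ℕ => 1 - (1 - p) ^ k) := by
    intro i j hij
    simp only
    have := pow_le_pow_of_le_one hq0 hq1 hij
    linarith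
  have hc := hT.isConnected
  set A : Finset V := univ.filter (· ≠ s) with hAdef
  have hAcard : A.card = n := by
    have : A = univ.erase s := by
      ext v; simp [hAdef, Finset.mem_erase]
    rw [this, Finset.card_erase_of_mem (Finset.mem_univ s), Finset.card_univ, hcard]
    omega
  have hkey : ∀ k, 1 ≤ k → k ≤ n → k ≤ (A.filter (fun v => T.dist s v ≤ k)).card := by
    intro k hk1 hkn
    have hball := card_ball_ge hc s k
    have hfs : A.filter (fun v => T.dist s v ≤ k) =
        (univ.filter (fun v => T.dist s v ≤ k)).erase s := by
      ext v
      simp only [hAdef, Finset.mem_filter, Finset.mem_erase, Finset.filter_filter,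
        Finset.mem_univ, true_and]
    have hsmem : s ∈ univ.filter (fun v => T.dist s v ≤ k) := by
      simp [SimpleGraph.dist_self]
    rw [hfs, Finset.card_erase_of_mem hsmem]
    omega
  have := sum_mono_le_sum_Icc (fun k => 1 - (1 - p) ^ k) hf n A (fun v => T.dist s v)
    hAcard (by simpa [hcard] using hkey)
  simpa [treeSAIDI, hAdef] using this
end

section
/- (Ring risk monotonicity.) Consider the ring network with n consumers and equal edge failure probability p ∈ (0,1), q = 1 − p. For 1 ≤ i < j ≤ n+1, the risk of the minimal cut set {e_i, e_j} equals R({i,j}) = q^{(i−1)+(n+1−j)} · p² · (j − i) (the probability that both edges fail while both are reachable from the source, times the number of disconnected consumers). Then for all indices with 1 ≤ i' ≤ i < j ≤ j' ≤ n+1 and (i', j') ≠ (i, j), one has the strict inequality R({i,j}) < R({i',j'}); that is, q^{(i−1)+(n+1−j)} · p² · (j − i) < q^{(i'−1)+(n+1−j')} · p² · (j' − i'). -/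
/-- Ring risk monotonicity: in the ring with `n` consumers and equal edge
failure probability `p ∈ (0,1)`, the risk of the minimal cut set `{e_i, e_j}`
is `q^{(i-1)+(n+1-j)} · p² · (j-i)`, and enlarging the cut set strictly
increases the risk: for `1 ≤ i' ≤ i < j ≤ j' ≤ n+1` with `(i',j') ≠ (i,j)`,
`R({i,j}) < R({i',j'})`. -/
theorem ring_risk_monotone (n : ℕ) (p : ℝ) (hp : p ∈ Set.Ioo (0 : ℝ) 1)
    (i j i' j' : ℕ) (hi' : 1 ≤ i') (hii : i' ≤ i) (hij : i < j) (hjj : j ≤ j')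
    (hj' : j' ≤ n + 1) (hne : (i', j') ≠ (i, j)) :
    (1 - p) ^ ((i - 1) + (n + 1 - j)) * p ^ 2 * ((j - i : ℕ) : ℝ) <
      (1 - p) ^ ((i' - 1) + (n + 1 - j')) * p ^ 2 * ((j' - i' : ℕ) : ℝ) := by
  obtain ⟨hp0, hp1⟩ := hp
  have hq0 : (0:ℝ) < 1 - p := by linarith
  have hq1 : 1 - p < 1 := by linarith
  have hne' : i' ≠ i ∨ j' ≠ j := by
    rcases eq_or_ne i' i with h | h
    · exact Or.inr fun hj => hne (by rw [h, hj])
    · exact Or.inl h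
  have ha : (i' - 1) + (n + 1 - j') < (i - 1) + (n + 1 - j) := by omega
  have hc : j - i ≤ j' - i' := by omega
  have hc0 : 1 ≤ j' - i' := by omega
  have hqpow : (1 - p) ^ ((i - 1) + (n + 1 - j)) <
      (1 - p) ^ ((i' - 1) + (n + 1 - j')) :=
    pow_lt_pow_right_of_lt_one₀ hq0 hq1 ha
  have h1 : (1 - p) ^ ((i - 1) + (n + 1 - j)) * p ^ 2 * ((j - i : ℕ) : ℝ) ≤
      (1 - p) ^ ((i - 1) + (n + 1 - j)) * p ^ 2 * ((j' - i' : ℕ) : ℝ) := by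
    have : ((j - i : ℕ) : ℝ) ≤ ((j' - i' : ℕ) : ℝ) := by exact_mod_cast hc
    have hnn : 0 ≤ (1 - p) ^ ((i - 1) + (n + 1 - j)) * p ^ 2 := by positivity
    nlinarith
  have h2 : (1 - p) ^ ((i - 1) + (n + 1 - j)) * p ^ 2 * ((j' - i' : ℕ) : ℝ) <
      (1 - p) ^ ((i' - 1) + (n + 1 - j')) * p ^ 2 * ((j' - i' : ℕ) : ℝ) := by
    apply mul_lt_mul_of_pos_right
    · exact mul_lt_mul_of_pos_right hqpow (by positivity)
    · exact_mod_cast Nat.lt_of_lt_of_le Nat.zero_lt_one hc0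
  exact lt_of_le_of_lt h1 h2
end

section
/- (Near-one optimality of star multigraphs, first coefficient.) Let G be a loopless multigraph on vertex set {s, v_1, …, v_n} with n ≥ 2 consumers and m ≥ 1 edges, and let b_{m−1}(G) = Σ over single edges e of (number of vertices disconnected from s when e is the only working edge) — i.e., the coefficient of p^{m−1}(1−p) in the binomial form of the SAIDI polynomial. Then b_{m−1}(G) ≥ m·(n−1), with equality if and only if every edge of G is incident to the source s (i.e., G is a star multigraph). -/
open scoped Classical
open Finset

lemma reach_single {V : Type*} (a : Sym2 V) {x y : V}
    (h : (SimpleGraph.fromEdgeSet {a}).Reachable x y) :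
    x = y ∨ (SimpleGraph.fromEdgeSet {a}).Adj x y := by
  obtain ⟨w⟩ := h
  induction w with
  | nil => exact Or.inl rfl
  | cons h w ih =>
    rename_i u v z
    rcases ih with rfl | h2
    · exact Or.inr h
    · left
      have h1 : s(u, v) = a ∧ u ≠ v := by
        simpa [SimpleGraph.fromEdgeSet_adj] using h
      have h3 : s(v, z) = a ∧ v ≠ z := by
        simpa [SimpleGraph.fromEdgeSet_adj] using h2
      have := h1.1.trans h3.1.symm
      rw [Sym2.eq_iff] at this
      rcases this with ⟨h4, h5⟩ | ⟨h4, h5⟩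
      · exact absurd h4 h1.2
      · exact h4

lemma count_single {V : Type*} [Fintype V] [DecidableEq V] (n : ℕ)
    (hV : Fintype.card V = n + 1) (s : V) (a : Sym2 V) (hd : ¬ a.IsDiag) :
    (univ.filter (fun v =>
      ¬ (SimpleGraph.fromEdgeSet {a}).Reachable s v)).card
      = if s ∈ a then n - 1 else n := by
  have hadj : ∀ v, (SimpleGraph.fromEdgeSet {a}).Adj s v ↔ s(s, v) = a ∧ s ≠ v := by
    intro v; simp [SimpleGraph.fromEdgeSet_adj]
  by_cases hs : s ∈ a
  · obtain ⟨t, rfl⟩ := Sym2.mem_iff_exists.mp hs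
    have hst : s ≠ t := fun h => hd (by simp [h])
    have hset : (univ.filter (fun v =>
        ¬ (SimpleGraph.fromEdgeSet {s(s,t)}).Reachable s v)) = univ \ {s, t} := by
      ext v
      simp only [mem_filter, mem_univ, true_and, mem_sdiff, mem_insert, mem_singleton]
      constructor
      · intro h
        rintro (rfl | rfl)
        · exact h (SimpleGraph.Reachable.refl _)
        · exact h ⟨SimpleGraph.Walk.cons ((hadj v).mpr ⟨rfl, hst⟩) SimpleGraph.Walk.nil⟩
      · intro h1 hr
        rcases reach_single _ hr with rfl | hA
        · exact h1 (Or.inl rfl)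
        · rw [hadj, Sym2.eq_iff] at hA
          rcases hA.1 with ⟨_, h4⟩ | ⟨h4, h5⟩
          · exact h1 (Or.inr h4)
          · exact h1 (Or.inl h5)
    rw [hset, Finset.card_sdiff_of_subset (by simp), Finset.card_univ, hV,
      Finset.card_insert_of_notMem (by simpa using hst), Finset.card_singleton]
    simp [hs]
  · have hset : (univ.filter (fun v =>
        ¬ (SimpleGraph.fromEdgeSet {a}).Reachable s v)) = univ \ {s} := by
      ext v
      simp only [mem_filter, mem_univ, true_and, mem_sdiff, mem_singleton]
      constructor
      · intro h
        rintro rfl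
        exact h (SimpleGraph.Reachable.refl _)
      · intro h1 hr
        rcases reach_single _ hr with rfl | hA
        · exact h1 rfl
        · rw [hadj] at hA
          exact hs (hA.1 ▸ Sym2.mem_mk_left s v)
    rw [hset, Finset.card_sdiff_of_subset (by simp), Finset.card_univ, hV, Finset.card_singleton]
    simp [hs]

/-- Near-one optimality of star multigraphs (first coefficient): for a loopless
multigraph `G` with source `s`, `n ≥ 2` consumers and `m ≥ 1` edges (given by an
edge index type `E` with endpoint map `ends`), the coefficient
`b_{m-1}(G) = ∑_e #{v : v disconnected from s when e is the only working edge}`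
satisfies `b_{m-1}(G) ≥ m·(n-1)`, with equality iff every edge is incident to
`s` (i.e. `G` is a star multigraph). -/
theorem near_one_star_multigraph {V E : Type*} [Fintype V] [DecidableEq V] [Fintype E]
    (n : ℕ) (hn : 2 ≤ n) (hV : Fintype.card V = n + 1) (hE : 1 ≤ Fintype.card E)
    (s : V) (ends : E → Sym2 V) (hloop : ∀ e : E, ¬ (ends e).IsDiag) :
    Fintype.card E * (n - 1) ≤
      ∑ e : E, (univ.filter (fun v =>
        ¬ (SimpleGraph.fromEdgeSet {ends e}).Reachable s v)).card ∧
    ((∑ e : E, (univ.filter (fun v =>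
        ¬ (SimpleGraph.fromEdgeSet {ends e}).Reachable s v)).card =
          Fintype.card E * (n - 1)) ↔ ∀ e : E, s ∈ ends e) := by
  have hcount : ∀ e : E, (univ.filter (fun v =>
      ¬ (SimpleGraph.fromEdgeSet {ends e}).Reachable s v)).card
      = if s ∈ ends e then n - 1 else n := fun e =>
    count_single n hV s (ends e) (hloop e)
  have hge : ∀ e : E, n - 1 ≤ (univ.filter (fun v =>
      ¬ (SimpleGraph.fromEdgeSet {ends e}).Reachable s v)).card := by
    intro e; rw [hcount e]; split <;> omega
  have hle : Fintype.card E * (n - 1) ≤ ∑ e : E, (univ.filter (fun v =>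
      ¬ (SimpleGraph.fromEdgeSet {ends e}).Reachable s v)).card := by
    calc Fintype.card E * (n - 1) = ∑ _e : E, (n - 1) := by
          rw [Finset.sum_const, Finset.card_univ, smul_eq_mul]
      _ ≤ _ := Finset.sum_le_sum fun e _ => hge e
  refine ⟨hle, ?_⟩
  have key : (∑ e : E, (univ.filter (fun v =>
      ¬ (SimpleGraph.fromEdgeSet {ends e}).Reachable s v)).card
        = ∑ _e : E, (n - 1)) ↔ ∀ e ∈ univ, (n - 1) = (univ.filter (fun v =>
      ¬ (SimpleGraph.fromEdgeSet {ends e}).Reachable s v)).card := by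
    rw [eq_comm]
    exact Finset.sum_eq_sum_iff_of_le (fun e _ => hge e)
  constructor
  · intro h e
    have := key.mp (by rw [h, Finset.sum_const, Finset.card_univ, smul_eq_mul]) e (mem_univ e)
    rw [hcount e] at this
    by_contra hc
    rw [if_neg hc] at this
    omega
  · intro h
    rw [Finset.sum_congr rfl (fun e _ => by rw [hcount e, if_pos (h e)]),
      Finset.sum_const, Finset.card_univ, smul_eq_mul]
end
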